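/- arXiv:1109.6310 — 3 statements merged into one kernel-verified Lean document; each statement's English description precedes it below -/
import Mathlib

section
/- For probability distributions P, Q on a finite set 𝒳 and a channel W : 𝒳 → 𝒫(𝒴) with 𝒴 finite, if ‖P − Q‖_∞ ≤ δ with δ ≤ 1/(2|𝒳||𝒴|), then |I(P, W) − I(Q, W)| ≤ δ|𝒳|·log|𝒴| − |𝒴||𝒳|δ·log(|𝒳|δ). -/
/-!
The difference `I(P,W) − I(Q,W)` splits into the change `H(PW) − H(QW)` of the output entropy
and the change `∑ₓ (P x − Q x) H(W x)` of the conditional entropy. Since `0 ≤ H(W x) ≤ log |Y|`,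
the latter is at most `δ |X| log |Y|`. The output distributions differ pointwise by at most
`t = |X| δ`, and `η(x) = −x log x` satisfies `|η a − η b| ≤ η t` whenever `|a − b| ≤ t ≤ e⁻¹`:
one direction is subadditivity of `η` followed by its monotonicity on `[0, e⁻¹]`, the other is
`η a − η (a + s) ≤ s ≤ η t`. Summing over `Y` bounds the former by `|Y| η(t)`.
-/

open Finset

/-- Shannon entropy of a distribution on a finite alphabet (natural logarithm). -/
noncomputable def shEntropy {α : Type*} [Fintype α] (p : α → ℝ) : ℝ :=
  -∑ a, p a * Real.log (p a)

/-- Mutual information `I(P,W) = H(PW) − Σₓ P(x) H(W(·|x))`. -/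
noncomputable def mutualInfo {X Y : Type*} [Fintype X] [Fintype Y]
    (P : X → ℝ) (W : X → Y → ℝ) : ℝ :=
  shEntropy (fun y => ∑ x, P x * W x y) - ∑ x, P x * shEntropy (W x)

namespace Real

lemma monotoneOn_negMulLog : MonotoneOn negMulLog (Set.Icc 0 (exp (-1))) := by
  refine monotoneOn_of_deriv_nonneg (convex_Icc _ _) continuous_negMulLog.continuousOn
    (fun x hx => ?_) (fun x hx => ?_) <;> rw [interior_Icc] at hx
  · exact (differentiableAt_negMulLog_iff.mpr hx.1.ne').differentiableWithinAt
  · have : log x < -1 := by simpa using log_lt_log hx.1 hx.2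
    rw [deriv_negMulLog hx.1.ne']
    linarith

lemma self_le_negMulLog {t : ℝ} (ht0 : 0 ≤ t) (ht : t ≤ exp (-1)) : t ≤ negMulLog t := by
  rcases ht0.eq_or_lt with rfl | ht0
  · simp
  have : log t ≤ -1 := by simpa using log_le_log ht0 ht
  rw [negMulLog, neg_mul]
  nlinarith

lemma negMulLog_add_le {a s : ℝ} (ha : 0 ≤ a) (hs : 0 ≤ s) :
    negMulLog (a + s) ≤ negMulLog a + negMulLog s := by
  rcases ha.eq_or_lt with rfl | ha
  · simp
  rcases hs.eq_or_lt with rfl | hs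
  · simp
  have hla : log a ≤ log (a + s) := log_le_log ha (by linarith)
  have hls : log s ≤ log (a + s) := log_le_log hs (by linarith)
  simp only [negMulLog, neg_mul]
  nlinarith [mul_le_mul_of_nonneg_left hla ha.le, mul_le_mul_of_nonneg_left hls hs.le]

lemma negMulLog_sub_negMulLog_add_le {a s : ℝ} (ha : 0 ≤ a) (hs : 0 ≤ s) (h1 : a + s ≤ 1) :
    negMulLog a - negMulLog (a + s) ≤ s := by
  rcases ha.eq_or_lt with rfl | ha
  · have := negMulLog_nonneg hs (by simpa using h1)
    simp only [negMulLog_zero, zero_add]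
    linarith
  have hlog : log ((a + s) / a) ≤ (a + s) / a - 1 := log_le_sub_one_of_pos (by positivity)
  rw [log_div (by positivity) ha.ne'] at hlog
  have hratio : a * (log (a + s) - log a) ≤ s := by
    calc a * (log (a + s) - log a) ≤ a * ((a + s) / a - 1) :=
          mul_le_mul_of_nonneg_left hlog ha.le
      _ = s := by field_simp; ring
  have hslog : s * log (a + s) ≤ 0 :=
    mul_nonpos_of_nonneg_of_nonpos hs (log_nonpos (by linarith) h1)
  simp only [negMulLog, neg_mul]
  nlinarith

lemma abs_negMulLog_sub_le {a b t : ℝ} (ha0 : 0 ≤ a) (hb0 : 0 ≤ b) (ha1 : a ≤ 1) (hb1 : b ≤ 1)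
    (hab : |a - b| ≤ t) (ht : t ≤ exp (-1)) :
    |negMulLog a - negMulLog b| ≤ negMulLog t := by
  wlog hle : a ≤ b generalizing a b
  · rw [abs_sub_comm] at hab ⊢
    exact this hb0 ha0 hb1 ha1 hab (le_of_not_ge hle)
  have hs : 0 ≤ b - a := by linarith
  have hst : b - a ≤ t := by rwa [abs_sub_comm, abs_of_nonneg hs] at hab
  have ht0 : 0 ≤ t := hs.trans hst
  have hb : a + (b - a) = b := by ring
  rw [abs_sub_le_iff]
  constructor
  · have := negMulLog_sub_negMulLog_add_le ha0 hs (by linarith)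
    rw [hb] at this
    linarith [self_le_negMulLog ht0 ht]
  · have := negMulLog_add_le ha0 hs
    rw [hb] at this
    linarith [monotoneOn_negMulLog ⟨hs, hst.trans ht⟩ ⟨ht0, ht⟩ hst]

end Real

open Real

section Entropy

variable {α : Type*} [Fintype α] {p q : α → ℝ}

lemma apply_le_one_of_sum_eq_one (h0 : ∀ a, 0 ≤ p a) (h1 : ∑ a, p a = 1) (a : α) : p a ≤ 1 :=
  h1 ▸ single_le_sum (fun b _ => h0 b) (mem_univ a)

lemma shEntropy_eq_sum_negMulLog (p : α → ℝ) : shEntropy p = ∑ a, negMulLog (p a) := by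
  simp [shEntropy, negMulLog, sum_neg_distrib]

lemma shEntropy_nonneg (h0 : ∀ a, 0 ≤ p a) (h1 : ∑ a, p a = 1) : 0 ≤ shEntropy p := by
  rw [shEntropy_eq_sum_negMulLog]
  exact sum_nonneg fun a _ => negMulLog_nonneg (h0 a) (apply_le_one_of_sum_eq_one h0 h1 a)

lemma shEntropy_eq_zero_of_subsingleton [Subsingleton α] (h1 : ∑ a, p a = 1) :
    shEntropy p = 0 := by
  have hp : ∀ a, p a = 1 := fun a => by rwa [Fintype.sum_subsingleton _ a] at h1
  simp [shEntropy_eq_sum_negMulLog, hp]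

lemma shEntropy_le_log_card (h0 : ∀ a, 0 ≤ p a) (h1 : ∑ a, p a = 1) :
    shEntropy p ≤ log (Fintype.card α) := by
  set n : ℝ := (Fintype.card α : ℝ) with hn
  have hn0 : 0 < n := by
    have : Nonempty α := by
      by_contra h
      simp [not_nonempty_iff.mp h] at h1
    rw [hn]
    exact_mod_cast Fintype.card_pos
  have hJensen := concaveOn_negMulLog.le_map_sum (t := univ) (w := fun _ => n⁻¹) (p := p)
    (fun _ _ => by positivity) (by simp [← hn, hn0.ne']) (fun a _ => h0 a)
  simp only [smul_eq_mul, ← mul_sum, h1, mul_one, ← shEntropy_eq_sum_negMulLog] at hJensen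
  rw [negMulLog, log_inv] at hJensen
  have := mul_le_mul_of_nonneg_left hJensen hn0.le
  field_simp at this
  linarith

lemma abs_shEntropy_sub_le {t : ℝ} (hp0 : ∀ a, 0 ≤ p a) (hp1 : ∑ a, p a = 1)
    (hq0 : ∀ a, 0 ≤ q a) (hq1 : ∑ a, q a = 1) (hpq : ∀ a, |p a - q a| ≤ t)
    (ht : t ≤ exp (-1)) :
    |shEntropy p - shEntropy q| ≤ Fintype.card α * negMulLog t := by
  rw [shEntropy_eq_sum_negMulLog, shEntropy_eq_sum_negMulLog, ← sum_sub_distrib]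
  calc |∑ a, (negMulLog (p a) - negMulLog (q a))|
      ≤ ∑ a, |negMulLog (p a) - negMulLog (q a)| := abs_sum_le_sum_abs _ _
    _ ≤ ∑ _a : α, negMulLog t := sum_le_sum fun a _ =>
        abs_negMulLog_sub_le (hp0 a) (hq0 a) (apply_le_one_of_sum_eq_one hp0 hp1 a)
          (apply_le_one_of_sum_eq_one hq0 hq1 a) (hpq a) ht
    _ = Fintype.card α * negMulLog t := by simp

end Entropy

section Channel

variable {X Y : Type*} [Fintype X] [Fintype Y] {P Q : X → ℝ} {W : X → Y → ℝ}

lemma sum_output_eq_one (hP1 : ∑ x, P x = 1) (hW1 : ∀ x, ∑ y, W x y = 1) :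
    ∑ y, ∑ x, P x * W x y = 1 := by
  rw [sum_comm]
  simp [← mul_sum, hW1, hP1]

lemma abs_output_sub_le {δ : ℝ} (hW0 : ∀ x y, 0 ≤ W x y) (hW1 : ∀ x, ∑ y, W x y = 1)
    (hδ : ∀ x, |P x - Q x| ≤ δ) (y : Y) :
    |∑ x, P x * W x y - ∑ x, Q x * W x y| ≤ Fintype.card X * δ := by
  rw [← sum_sub_distrib]
  calc |∑ x, (P x * W x y - Q x * W x y)|
      ≤ ∑ x, |P x - Q x| * W x y := by
        refine (abs_sum_le_sum_abs _ _).trans_eq (sum_congr rfl fun x _ => ?_)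
        rw [← sub_mul, abs_mul, abs_of_nonneg (hW0 x y)]
    _ ≤ ∑ _x : X, δ := sum_le_sum fun x _ =>
        (mul_le_of_le_one_right (abs_nonneg _)
          (apply_le_one_of_sum_eq_one (hW0 x) (hW1 x) y)).trans (hδ x)
    _ = Fintype.card X * δ := by simp

lemma mutualInfo_sub_mutualInfo (P Q : X → ℝ) (W : X → Y → ℝ) :
    mutualInfo P W - mutualInfo Q W =
      (shEntropy (fun y => ∑ x, P x * W x y) - shEntropy (fun y => ∑ x, Q x * W x y))
        - ∑ x, (P x - Q x) * shEntropy (W x) := by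
  simp only [mutualInfo, sub_mul, sum_sub_distrib]
  ring

lemma abs_sum_sub_mul_shEntropy_le {δ : ℝ} (hW0 : ∀ x y, 0 ≤ W x y)
    (hW1 : ∀ x, ∑ y, W x y = 1) (hδ : ∀ x, |P x - Q x| ≤ δ) :
    |∑ x, (P x - Q x) * shEntropy (W x)| ≤ δ * Fintype.card X * log (Fintype.card Y) := by
  calc |∑ x, (P x - Q x) * shEntropy (W x)|
      ≤ ∑ x, |P x - Q x| * shEntropy (W x) := by
        refine (abs_sum_le_sum_abs _ _).trans_eq (sum_congr rfl fun x _ => ?_)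
        rw [abs_mul, abs_of_nonneg (shEntropy_nonneg (hW0 x) (hW1 x))]
    _ ≤ ∑ _x : X, δ * log (Fintype.card Y) := sum_le_sum fun x _ =>
        mul_le_mul (hδ x) (shEntropy_le_log_card (hW0 x) (hW1 x))
          (shEntropy_nonneg (hW0 x) (hW1 x)) ((abs_nonneg _).trans (hδ x))
    _ = δ * Fintype.card X * log (Fintype.card Y) := by
        simp only [sum_const, card_univ, nsmul_eq_mul]
        ring

/-- With two or more outputs, `|X| δ ≤ 1/(2|Y|) ≤ 1/4 < e⁻¹`, so `abs_shEntropy_sub_le` applies;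
with a single output both entropies vanish. -/
lemma abs_shEntropy_output_sub_le {δ : ℝ} (hP0 : ∀ x, 0 ≤ P x) (hP1 : ∑ x, P x = 1)
    (hQ0 : ∀ x, 0 ≤ Q x) (hQ1 : ∑ x, Q x = 1)
    (hW0 : ∀ x y, 0 ≤ W x y) (hW1 : ∀ x, ∑ y, W x y = 1) (hδ : ∀ x, |P x - Q x| ≤ δ)
    (hδ2 : δ ≤ 1 / (2 * (Fintype.card X) * (Fintype.card Y))) :
    |shEntropy (fun y => ∑ x, P x * W x y) - shEntropy (fun y => ∑ x, Q x * W x y)|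
      ≤ Fintype.card Y * negMulLog (Fintype.card X * δ) := by
  have hPW0 : ∀ y, 0 ≤ ∑ x, P x * W x y := fun y =>
    sum_nonneg fun x _ => mul_nonneg (hP0 x) (hW0 x y)
  have hQW0 : ∀ y, 0 ≤ ∑ x, Q x * W x y := fun y =>
    sum_nonneg fun x _ => mul_nonneg (hQ0 x) (hW0 x y)
  have hX : Nonempty X := by
    by_contra h
    simp [not_nonempty_iff.mp h] at hP1
  have hY : Nonempty Y := by
    by_contra h
    simp [not_nonempty_iff.mp h] at hW1
  set m : ℝ := (Fintype.card X : ℝ) with hm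
  set n : ℝ := (Fintype.card Y : ℝ) with hn
  have hm0 : 0 < m := by rw [hm]; exact_mod_cast Fintype.card_pos
  have hn1 : 1 ≤ n := by rw [hn]; exact_mod_cast Fintype.card_pos
  have ht0 : 0 ≤ m * δ := mul_nonneg hm0.le ((abs_nonneg _).trans (hδ hX.some))
  have ht : m * δ ≤ 1 / (2 * n) := by
    calc m * δ ≤ m * (1 / (2 * m * n)) := mul_le_mul_of_nonneg_left hδ2 hm0.le
      _ = 1 / (2 * n) := by field_simp
  rcases le_or_gt (Fintype.card Y) 1 with hY1 | hY2
  · have : Subsingleton Y := Fintype.card_le_one_iff_subsingleton.mp hY1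
    rw [shEntropy_eq_zero_of_subsingleton (sum_output_eq_one hP1 hW1),
      shEntropy_eq_zero_of_subsingleton (sum_output_eq_one hQ1 hW1), sub_zero, abs_zero]
    have : 1 / (2 * n) ≤ 1 := by rw [div_le_one (by positivity)]; linarith
    exact mul_nonneg (by positivity) (negMulLog_nonneg ht0 (by linarith))
  · have hn2 : 2 ≤ n := by rw [hn]; exact_mod_cast hY2
    have : 1 / (2 * n) ≤ exp (-1) := by
      have := exp_neg_one_gt_d9
      rw [div_le_iff₀ (by positivity)]
      nlinarith
    exact abs_shEntropy_sub_le hPW0 (sum_output_eq_one hP1 hW1) hQW0 (sum_output_eq_one hQ1 hW1)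
      (abs_output_sub_le hW0 hW1 hδ) (ht.trans this)

end Channel

/-- Continuity of mutual information in the input distribution: if `‖P − Q‖_∞ ≤ δ` with
`δ ≤ 1/(2|X||Y|)`, then `|I(P,W) − I(Q,W)| ≤ δ|X| log|Y| − |Y||X|δ log(|X|δ)`. -/
theorem mutualInfo_continuity {X Y : Type*} [Fintype X] [Fintype Y]
    (P Q : X → ℝ) (W : X → Y → ℝ)
    (hP0 : ∀ x, 0 ≤ P x) (hP1 : ∑ x, P x = 1)
    (hQ0 : ∀ x, 0 ≤ Q x) (hQ1 : ∑ x, Q x = 1)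
    (hW0 : ∀ x y, 0 ≤ W x y) (hW1 : ∀ x, ∑ y, W x y = 1)
    (δ : ℝ) (hδ : ∀ x, |P x - Q x| ≤ δ)
    (hδ2 : δ ≤ 1 / (2 * (Fintype.card X) * (Fintype.card Y))) :
    |mutualInfo P W - mutualInfo Q W|
      ≤ δ * (Fintype.card X) * Real.log (Fintype.card Y)
        - (Fintype.card Y) * (Fintype.card X) * δ * Real.log ((Fintype.card X) * δ) := by
  rw [mutualInfo_sub_mutualInfo]
  calc _ ≤ _ := abs_sub _ _
    _ ≤ Fintype.card Y * negMulLog (Fintype.card X * δ)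
          + δ * Fintype.card X * log (Fintype.card Y) :=
        add_le_add (abs_shEntropy_output_sub_le hP0 hP1 hQ0 hQ1 hW0 hW1 hδ hδ2)
          (abs_sum_sub_mul_shEntropy_le hW0 hW1 hδ)
    _ = _ := by rw [negMulLog]; ring
end

section
/- Fix a finite source alphabet 𝒮, a finite reproduction alphabet 𝒮̂, a distortion measure d : 𝒮×𝒮̂ → ℝ₊, a type P ∈ 𝒫ₙ(𝒮), and a reconstruction sequence ŝ ∈ 𝒮̂ⁿ. Then the restricted D-ball B(ŝ, P, D) = {s ∈ Tₚⁿ : d(s, ŝ) ≤ D} satisfies |B(ŝ, P, D)| ≤ (n+1)^{|𝒮||𝒮̂|} · exp{ n [H(P) − R(P, D)] }. -/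
open Finset

/-- Mutual information of a source distribution `P` and a test channel `Λ`. -/
noncomputable def miSrc {S T : Type*} [Fintype S] [Fintype T]
    (P : S → ℝ) (Λ : S → T → ℝ) : ℝ :=
  ∑ s, ∑ t, P s * Λ s t * Real.log (Λ s t / (∑ s', P s' * Λ s' t))

/-- Rate-distortion function: infimum of `I(P,Λ)` over test channels with expected
distortion at most `D`. -/
noncomputable def RDF {S T : Type*} [Fintype S] [Fintype T]
    (P : S → ℝ) (d : S → T → ℝ) (D : ℝ) : ℝ :=
  sInf {r : ℝ | ∃ Λ : S → T → ℝ, (∀ s t, 0 ≤ Λ s t) ∧ (∀ s, ∑ t, Λ s t = 1) ∧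
    (∑ s, ∑ t, P s * Λ s t * d s t) ≤ D ∧ r = miSrc P Λ}

/-!
Sort the sequences of the ball by their joint type `Q` with `ŝ`; there are at most
`(n+1)^{|S||Ŝ|}` joint types. Under the product measure `∏ᵢ Q(· | ŝᵢ)`, a probability measure on
`Sⁿ`, every sequence of joint type `Q` has the same mass `exp(-n H_Q(S | Ŝ))`, so there are at most
`exp(n H_Q(S | Ŝ))` of them. Finally the conditional type `Q(ŝ | s)` is a test channel for `P` of
distortion at most `D`, whence `R(P, D) ≤ I = H(P) - H_Q(S | Ŝ)`.
-/

open Real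

lemma sub_le_mul_log_div {a b : ℝ} (ha : 0 ≤ a) (hb : 0 ≤ b) (hab : 0 < a → 0 < b) :
    a - b ≤ a * log (a / b) := by
  rcases ha.eq_or_lt with rfl | ha
  · simpa using hb
  have hb := hab ha
  have hlog := one_sub_inv_le_log_of_pos (div_pos ha hb)
  rw [inv_div] at hlog
  calc a - b = a * (1 - b / a) := by field_simp
    _ ≤ a * log (a / b) := mul_le_mul_of_nonneg_left hlog ha.le

section InformationTheory

variable {S T : Type*} [Fintype S] [Fintype T]

noncomputable def condEntropy (Q : S → T → ℝ) : ℝ :=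
  -∑ s, ∑ t, Q s t * log (Q s t / ∑ s', Q s' t)

/-- On a row of zero mass any distribution would do; taking the second marginal of `Q` avoids
having to choose a point of `T`. -/
noncomputable def condChannel (Q : S → T → ℝ) (s : S) (t : T) : ℝ :=
  if ∑ t', Q s t' = 0 then ∑ s', Q s' t else Q s t / ∑ t', Q s t'

theorem miSrc_nonneg {P : S → ℝ} {Λ : S → T → ℝ} (hP0 : ∀ s, 0 ≤ P s) (hP1 : ∑ s, P s = 1)
    (hΛ0 : ∀ s t, 0 ≤ Λ s t) (hΛ1 : ∀ s, ∑ t, Λ s t = 1) : 0 ≤ miSrc P Λ := by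
  set q : T → ℝ := fun t => ∑ s', P s' * Λ s' t
  have hq0 : ∀ t, 0 ≤ q t := fun t => sum_nonneg fun s _ => mul_nonneg (hP0 s) (hΛ0 s t)
  have hq1 : ∑ t, q t = 1 := by
    simp only [q]
    rw [sum_comm]
    simp [← mul_sum, hΛ1, hP1]
  have hpoint : ∀ s t, P s * (Λ s t - q t) ≤ P s * Λ s t * log (Λ s t / q t) := by
    intro s t
    rcases (hP0 s).eq_or_lt with hs | hs
    · simp [← hs]
    rw [mul_assoc]
    refine mul_le_mul_of_nonneg_left (sub_le_mul_log_div (hΛ0 s t) (hq0 t) fun hΛ => ?_) hs.le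
    exact (mul_pos hs hΛ).trans_le
      (single_le_sum (fun s' _ => mul_nonneg (hP0 s') (hΛ0 s' t)) (mem_univ s))
  calc 0 = ∑ s, ∑ t, P s * (Λ s t - q t) := by
        simp [← mul_sum, sum_sub_distrib, hΛ1, hq1]
    _ ≤ miSrc P Λ := sum_le_sum fun s _ => sum_le_sum fun t _ => hpoint s t

theorem RDF_le_miSrc {P : S → ℝ} {d : S → T → ℝ} {D : ℝ} {Λ : S → T → ℝ}
    (hP0 : ∀ s, 0 ≤ P s) (hP1 : ∑ s, P s = 1) (hΛ0 : ∀ s t, 0 ≤ Λ s t)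
    (hΛ1 : ∀ s, ∑ t, Λ s t = 1) (hD : ∑ s, ∑ t, P s * Λ s t * d s t ≤ D) :
    RDF P d D ≤ miSrc P Λ :=
  csInf_le ⟨0, by rintro _ ⟨Λ', h0, h1, -, rfl⟩; exact miSrc_nonneg hP0 hP1 h0 h1⟩
    ⟨Λ, hΛ0, hΛ1, hD, rfl⟩

variable {Q : S → T → ℝ}

theorem sum_mul_condChannel (hQ0 : ∀ s t, 0 ≤ Q s t) (s : S) (t : T) :
    (∑ t', Q s t') * condChannel Q s t = Q s t := by
  unfold condChannel
  split_ifs with h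
  · rw [h, zero_mul, (sum_eq_zero_iff_of_nonneg fun t' _ => hQ0 s t').1 h t (mem_univ t)]
  · exact mul_div_cancel₀ _ h

theorem condChannel_nonneg (hQ0 : ∀ s t, 0 ≤ Q s t) (s : S) (t : T) : 0 ≤ condChannel Q s t := by
  unfold condChannel
  split_ifs
  · exact sum_nonneg fun s' _ => hQ0 s' t
  · exact div_nonneg (hQ0 s t) (sum_nonneg fun t' _ => hQ0 s t')

theorem sum_condChannel (hQ1 : ∑ s, ∑ t, Q s t = 1) (s : S) : ∑ t, condChannel Q s t = 1 := by
  unfold condChannel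
  split_ifs with h
  · rwa [sum_comm]
  · rw [← sum_div, div_self h]

theorem miSrc_condChannel (hQ0 : ∀ s t, 0 ≤ Q s t) :
    miSrc (fun s => ∑ t, Q s t) (condChannel Q)
      = shEntropy (fun s => ∑ t, Q s t) - condEntropy Q := by
  have hterm : ∀ s t, Q s t * log (condChannel Q s t / ∑ s', Q s' t)
      = Q s t * log (Q s t / ∑ s', Q s' t) - Q s t * log (∑ t', Q s t') := by
    intro s t
    rcases (hQ0 s t).eq_or_lt with hst | hst
    · simp [← hst]
    have hP : 0 < ∑ t', Q s t' := hst.trans_le (single_le_sum (fun t' _ => hQ0 s t') (mem_univ t))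
    have hq : 0 < ∑ s', Q s' t := hst.trans_le (single_le_sum (fun s' _ => hQ0 s' t) (mem_univ s))
    rw [condChannel, if_neg hP.ne', div_div, mul_comm (∑ t', Q s t'), ← div_div,
      log_div (div_pos hst hq).ne' hP.ne', mul_sub]
  simp only [miSrc, sum_mul_condChannel hQ0, hterm, shEntropy, condEntropy, sum_sub_distrib,
    ← sum_mul]
  ring

theorem condEntropy_le_shEntropy_sub_RDF {d : S → T → ℝ} {D : ℝ} (hQ0 : ∀ s t, 0 ≤ Q s t)
    (hQ1 : ∑ s, ∑ t, Q s t = 1) (hD : ∑ s, ∑ t, Q s t * d s t ≤ D) :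
    condEntropy Q ≤ shEntropy (fun s => ∑ t, Q s t) - RDF (fun s => ∑ t, Q s t) d D := by
  have hR := RDF_le_miSrc (Λ := condChannel Q) (fun s => sum_nonneg fun t _ => hQ0 s t) hQ1
    (condChannel_nonneg hQ0) (sum_condChannel hQ1) (by simpa only [sum_mul_condChannel hQ0])
  rw [miSrc_condChannel hQ0] at hR
  linarith

end InformationTheory

section Types

variable {ι S T : Type*} [Fintype ι] [DecidableEq S] [DecidableEq T]

def jointType (v : ι → S) (w : ι → T) (p : S × T) : ℕ := #{i | (v i, w i) = p}

noncomputable def jointDist (v : ι → S) (w : ι → T) (s : S) (t : T) : ℝ :=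
  jointType v w (s, t) / Fintype.card ι

theorem jointType_le_card (v : ι → S) (w : ι → T) (p : S × T) :
    jointType v w p ≤ Fintype.card ι :=
  card_filter_le _ _

theorem jointType_pos (v : ι → S) (w : ι → T) (i : ι) : 0 < jointType v w (v i, w i) :=
  card_pos.2 ⟨i, by simp⟩

theorem sum_jointType_nsmul [Fintype S] [Fintype T] {M : Type*} [AddCommMonoid M]
    (v : ι → S) (w : ι → T) (f : S × T → M) :
    ∑ p, jointType v w p • f p = ∑ i, f (v i, w i) := by
  simp only [jointType, ← sum_const]
  exact sum_fiberwise' _ _ f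

theorem sum_jointType_left [Fintype T] (v : ι → S) (w : ι → T) (s : S) :
    ∑ t, jointType v w (s, t) = #{i | v i = s} := by
  rw [card_eq_sum_card_fiberwise (f := w) (t := univ) fun _ _ => mem_univ _]
  simp [jointType, filter_filter, Prod.ext_iff]

theorem sum_jointType_right [Fintype S] (v : ι → S) (w : ι → T) (t : T) :
    ∑ s, jointType v w (s, t) = #{i | w i = t} := by
  rw [card_eq_sum_card_fiberwise (f := v) (t := univ) fun _ _ => mem_univ _]
  simp [jointType, filter_filter, Prod.ext_iff, and_comm]

theorem card_image_jointType_le [Fintype S] [Fintype T] (A : Finset (ι → S)) (w : ι → T) :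
    #(A.image (jointType · w)) ≤ (Fintype.card ι + 1) ^ (Fintype.card S * Fintype.card T) := by
  calc #(A.image (jointType · w))
      ≤ #(Fintype.piFinset fun _ : S × T => range (Fintype.card ι + 1)) := by
        refine card_le_card fun N hN => ?_
        obtain ⟨v, -, rfl⟩ := mem_image.1 hN
        simpa [Nat.lt_succ_iff] using jointType_le_card v w
    _ = (Fintype.card ι + 1) ^ (Fintype.card S * Fintype.card T) := by simp

theorem jointDist_nonneg (v : ι → S) (w : ι → T) (s : S) (t : T) : 0 ≤ jointDist v w s t := by
  unfold jointDist
  positivity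

theorem card_mul_jointDist (v : ι → S) (w : ι → T) (s : S) (t : T) :
    Fintype.card ι * jointDist v w s t = jointType v w (s, t) := by
  rcases (Fintype.card ι).eq_zero_or_pos with h | h
  · have : IsEmpty ι := Fintype.card_eq_zero_iff.1 h
    simp [jointType]
  · exact mul_div_cancel₀ _ (by positivity)

theorem sum_jointDist_mul [Fintype S] [Fintype T] (v : ι → S) (w : ι → T) (f : S → T → ℝ) :
    ∑ s, ∑ t, jointDist v w s t * f s t = (∑ i, f (v i) (w i)) / Fintype.card ι := by
  simp only [jointDist, div_mul_eq_mul_div, ← sum_div, ← nsmul_eq_mul, ← Fintype.sum_prod_type']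
  rw [sum_jointType_nsmul v w fun p => f p.1 p.2]

theorem sum_jointDist [Fintype S] [Fintype T] [Nonempty ι] (v : ι → S) (w : ι → T) :
    ∑ s, ∑ t, jointDist v w s t = 1 := by
  simpa using sum_jointDist_mul v w fun _ _ => 1

theorem sum_jointDist_left [Fintype T] (v : ι → S) (w : ι → T) (s : S) :
    ∑ t, jointDist v w s t = #{i | v i = s} / Fintype.card ι := by
  rw [← sum_jointType_left v w s, Nat.cast_sum, sum_div]
  rfl

theorem sum_jointDist_right [Fintype S] (v : ι → S) (w : ι → T) (t : T) :
    ∑ s, jointDist v w s t = #{i | w i = t} / Fintype.card ι := by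
  rw [← sum_jointType_right v w t, Nat.cast_sum, sum_div]
  rfl

theorem card_jointType_fiber_le [Fintype S] [Fintype T] [DecidableEq ι] (v : ι → S) (w : ι → T) :
    (#{v' | jointType v' w = jointType v w} : ℝ)
      ≤ exp (Fintype.card ι * condEntropy (jointDist v w)) := by
  set Q := jointDist v w
  set r : S → T → ℝ := fun s t => Q s t / ∑ s', Q s' t
  have hq : ∀ i, 0 < ∑ s, Q s (w i) := fun i => by
    have : Nonempty ι := ⟨i⟩
    have : 0 < #{j | w j = w i} := card_pos.2 ⟨i, by simp⟩
    rw [sum_jointDist_right]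
    positivity
  have htotal : ∑ v' : ι → S, ∏ i, r (v' i) (w i) = 1 := by
    rw [← Fintype.prod_sum fun i s => r s (w i)]
    exact prod_eq_one fun i _ => by rw [← sum_div, div_self (hq i).ne']
  have hweight : ∀ v', jointType v' w = jointType v w →
      ∏ i, r (v' i) (w i) = exp (-(Fintype.card ι * condEntropy Q)) := by
    intro v' hv'
    have hr : ∀ i, 0 < r (v' i) (w i) := fun i => by
      have : Nonempty ι := ⟨i⟩
      have := jointType_pos v' w i
      rw [hv'] at this
      exact div_pos (by unfold Q jointDist; positivity) (hq i)
    calc ∏ i, r (v' i) (w i) = exp (∑ i, log (r (v' i) (w i))) := by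
          rw [exp_sum]
          exact prod_congr rfl fun i _ => (exp_log (hr i)).symm
      _ = exp (∑ p, jointType v w p * log (r p.1 p.2)) := by
          rw [← hv']
          simp only [← nsmul_eq_mul]
          rw [sum_jointType_nsmul v' w fun p => log (r p.1 p.2)]
      _ = exp (-(Fintype.card ι * condEntropy Q)) := by
          simp only [condEntropy, Fintype.sum_prod_type, ← card_mul_jointDist v w, mul_neg, neg_neg,
            mul_sum, mul_assoc, Q, r]
  have hcount : #{v' | jointType v' w = jointType v w} • exp (-(Fintype.card ι * condEntropy Q))
      ≤ 1 := by
    calc _ ≤ ∑ v' ∈ {v' | jointType v' w = jointType v w}, ∏ i, r (v' i) (w i) :=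
          card_nsmul_le_sum _ _ _ fun v' hv' => (hweight v' (mem_filter.1 hv').2).ge
      _ ≤ ∑ v' : ι → S, ∏ i, r (v' i) (w i) :=
          sum_le_univ_sum_of_nonneg fun v' => prod_nonneg fun i _ =>
            div_nonneg (jointDist_nonneg _ _ _ _) (hq i).le
      _ = 1 := htotal
  rwa [nsmul_eq_mul, exp_neg, ← div_eq_mul_inv, div_le_one (exp_pos _)] at hcount

theorem condEntropy_jointDist_le [Fintype S] [Fintype T] [Nonempty ι] {v : ι → S} {w : ι → T}
    {P : S → ℝ} {d : S → T → ℝ} {D : ℝ} (hP : ∀ s, (#{i | v i = s} : ℝ) = Fintype.card ι * P s)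
    (hD : (∑ i, d (v i) (w i)) / Fintype.card ι ≤ D) :
    condEntropy (jointDist v w) ≤ shEntropy P - RDF P d D := by
  have hmarg : (fun s => ∑ t, jointDist v w s t) = P := funext fun s => by
    rw [sum_jointDist_left, hP, mul_div_cancel_left₀ _ (by positivity)]
  rw [← hmarg]
  exact condEntropy_le_shEntropy_sub_RDF (jointDist_nonneg v w) (sum_jointDist v w)
    (by rwa [sum_jointDist_mul])

end Types

theorem restricted_D_ball_size_general {S T : Type*} [Fintype S] [Fintype T] [DecidableEq S]
    (n : ℕ) (hn : 0 < n) (P : S → ℝ)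
    (d : S → T → ℝ) (D : ℝ) (shat : Fin n → T) :
    (Set.ncard {v : Fin n → S |
        (∀ a, ((Finset.univ.filter (fun i => v i = a)).card : ℝ) = n * P a) ∧
        (1 / n) * ∑ i, d (v i) (shat i) ≤ D} : ℝ)
      ≤ (n + 1) ^ (Fintype.card S * Fintype.card T) *
        Real.exp (n * (shEntropy P - RDF P d D)) := by
  classical
  have : Nonempty (Fin n) := ⟨⟨0, hn⟩⟩
  set B : Finset (Fin n → S) := {v | (∀ a, (#{i | v i = a} : ℝ) = n * P a) ∧
    (1 / n) * ∑ i, d (v i) (shat i) ≤ D}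
  have hfiber : ∀ N ∈ B.image (jointType · shat),
      (#{v ∈ B | jointType v shat = N} : ℝ) ≤ exp (n * (shEntropy P - RDF P d D)) := by
    simp only [mem_image]
    rintro _ ⟨v, hv, rfl⟩
    obtain ⟨-, hP, hD⟩ := mem_filter.1 hv
    calc (#{v' ∈ B | jointType v' shat = jointType v shat} : ℝ)
        ≤ #{v' | jointType v' shat = jointType v shat} := by
          exact_mod_cast card_le_card (filter_subset_filter _ (subset_univ B))
      _ ≤ exp (n * condEntropy (jointDist v shat)) := by
          simpa using card_jointType_fiber_le v shat
      _ ≤ exp (n * (shEntropy P - RDF P d D)) := by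
          gcongr
          exact condEntropy_jointDist_le (by simpa using hP) (by simpa [div_eq_inv_mul] using hD)
  calc _ = (#B : ℝ) := by rw [← coe_filter_univ, Set.ncard_coe_finset]
    _ = ∑ N ∈ B.image (jointType · shat), (#{v ∈ B | jointType v shat = N} : ℝ) := by
        exact_mod_cast card_eq_sum_card_image _ B
    _ ≤ #(B.image (jointType · shat)) • exp (n * (shEntropy P - RDF P d D)) :=
        sum_le_card_nsmul _ _ _ hfiber
    _ ≤ _ := by
        rw [nsmul_eq_mul]
        gcongr
        exact_mod_cast by simpa using card_image_jointType_le B shat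

/-- Restricted `D`-ball size: the number of source sequences of type `P` that are
`D`-covered by a fixed reconstruction sequence `ŝ` is at most
`(n+1)^{|S||Ŝ|} exp(n[H(P) − R(P,D)])`. -/
theorem restricted_D_ball_size {S T : Type*} [Fintype S] [Fintype T] [DecidableEq S]
    (n : ℕ) (hn : 0 < n) (P : S → ℝ) (hP1 : ∑ s, P s = 1)
    (htype : ∀ s, ∃ k : ℕ, (n : ℝ) * P s = k)
    (d : S → T → ℝ) (hd0 : ∀ s t, 0 ≤ d s t) (D : ℝ) (shat : Fin n → T) :
    (Set.ncard {v : Fin n → S |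
        (∀ a, ((Finset.univ.filter (fun i => v i = a)).card : ℝ) = n * P a) ∧
        (1 / n) * ∑ i, d (v i) (shat i) ≤ D} : ℝ)
      ≤ (n + 1) ^ (Fintype.card S * Fintype.card T) *
        Real.exp (n * (shEntropy P - RDF P d D)) :=
  restricted_D_ball_size_general n hn P d D shat
end

section
/- Let ε ∈ (0,1) and λ = 1. Consider the optimization min over pairs (ε_s, ε_c) ∈ (0,1)² with ε_s + ε_c − ε_s·ε_c ≤ ε of Q⁻¹(ε_s) + Q⁻¹(ε_c), where Q⁻¹ is the inverse of the Gaussian tail function Q(x) = ∫ₓ^∞ (1/√(2π))e^{−t²/2}dt. The minimum is attained at ε_s = ε_c = 1 − √(1−ε), giving optimal value 2·Q⁻¹(1 − √(1−ε)). -/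
/-!
Write `Φ = 1 - Q` for the standard normal distribution function and `φ` for its density. With
`x = Q⁻¹(ε_s)`, `y = Q⁻¹(ε_c)` and `m = Q⁻¹(1 - √(1 - ε))`, the constraint says
`Φ(x) Φ(y) ≥ 1 - ε = Φ(m)²`. The function `Φ` is log-concave: `(log Φ)' = φ / Φ` is
decreasing because `φ(x) + x Φ(x) = ∫_{-∞}^x (x - t) φ(t) dt ≥ 0`. Hence
`Φ(m)² ≤ Φ((x + y) / 2)²`, and since `Φ` is increasing, `2 m ≤ x + y`.
-/

/-- The Gaussian tail function `Q(x) = ∫ₓ^∞ (1/√(2π)) e^{−t²/2} dt`. -/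
noncomputable def gaussQ (x : ℝ) : ℝ :=
  ∫ t in Set.Ioi x, Real.exp (-t ^ 2 / 2) / Real.sqrt (2 * Real.pi)

open MeasureTheory Real Set Filter Topology

noncomputable def stdNormalPDF (x : ℝ) : ℝ := exp (-x ^ 2 / 2) / √(2 * π)

noncomputable def stdNormalCDF (x : ℝ) : ℝ := ∫ t in Iic x, stdNormalPDF t

lemma stdNormalPDF_eq_exp_neg_mul_sq :
    stdNormalPDF = fun x => exp (-(1 / 2) * x ^ 2) / √(2 * π) := by
  ext x; rw [stdNormalPDF, neg_div, neg_mul, one_div_mul_eq_div]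

lemma stdNormalPDF_pos (x : ℝ) : 0 < stdNormalPDF x := by
  unfold stdNormalPDF; positivity

lemma continuous_stdNormalPDF : Continuous stdNormalPDF := by
  unfold stdNormalPDF; fun_prop

lemma integrable_stdNormalPDF : Integrable stdNormalPDF := by
  rw [stdNormalPDF_eq_exp_neg_mul_sq]; exact (integrable_exp_neg_mul_sq (by norm_num)).div_const _

lemma integrable_mul_stdNormalPDF : Integrable fun x => x * stdNormalPDF x := by
  simp only [stdNormalPDF_eq_exp_neg_mul_sq, ← mul_div_assoc]
  exact (integrable_mul_exp_neg_mul_sq (by norm_num)).div_const _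

lemma integral_stdNormalPDF : ∫ x, stdNormalPDF x = 1 := by
  rw [stdNormalPDF_eq_exp_neg_mul_sq, integral_div, integral_gaussian,
    div_eq_one_iff_eq (by positivity)]
  ring_nf

lemma hasDerivAt_stdNormalPDF (x : ℝ) : HasDerivAt stdNormalPDF (-x * stdNormalPDF x) x := by
  rw [stdNormalPDF_eq_exp_neg_mul_sq]
  refine ((((hasDerivAt_pow 2 x).const_mul (-(1 / 2) : ℝ)).exp).div_const
    (√(2 * π))).congr_deriv ?_
  push_cast; ring

lemma tendsto_stdNormalPDF_atBot : Tendsto stdNormalPDF atBot (𝓝 0) :=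
  tendsto_zero_of_hasDerivAt_of_integrableOn_Iic (a := 0) (fun x _ => hasDerivAt_stdNormalPDF x)
    (by simpa only [neg_mul, Pi.neg_def] using integrable_mul_stdNormalPDF.neg.integrableOn)
    integrable_stdNormalPDF.integrableOn

lemma integral_Iic_mul_stdNormalPDF (x : ℝ) :
    ∫ t in Iic x, t * stdNormalPDF t = -stdNormalPDF x := by
  have := integral_Iic_of_hasDerivAt_of_tendsto' (f := fun t => -stdNormalPDF t) (a := x)
    (fun t _ => (hasDerivAt_stdNormalPDF t).neg)
    (by simpa only [neg_mul, neg_neg] using integrable_mul_stdNormalPDF.integrableOn)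
    tendsto_stdNormalPDF_atBot.neg
  simpa using this

lemma gaussQ_eq_one_sub_stdNormalCDF (x : ℝ) : gaussQ x = 1 - stdNormalCDF x := by
  rw [← integral_stdNormalPDF, ← intervalIntegral.integral_Iic_add_Ioi (b := x)
    integrable_stdNormalPDF.integrableOn integrable_stdNormalPDF.integrableOn, stdNormalCDF,
    add_sub_cancel_left]
  rfl

lemma hasDerivAt_stdNormalCDF (x : ℝ) : HasDerivAt stdNormalCDF (stdNormalPDF x) x := by
  have hsplit : ∀ y, stdNormalCDF y = stdNormalCDF 0 + ∫ t in (0 : ℝ)..y, stdNormalPDF t := by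
    intro y
    rw [stdNormalCDF, stdNormalCDF, ← intervalIntegral.integral_Iic_sub_Iic
      integrable_stdNormalPDF.integrableOn integrable_stdNormalPDF.integrableOn, add_sub_cancel]
  rw [funext hsplit]
  exact (intervalIntegral.integral_hasDerivAt_right
    (continuous_stdNormalPDF.intervalIntegrable 0 x)
    (continuous_stdNormalPDF.stronglyMeasurableAtFilter _ _)
    continuous_stdNormalPDF.continuousAt).const_add _

lemma stdNormalCDF_strictMono : StrictMono stdNormalCDF :=
  strictMono_of_deriv_pos fun x => (hasDerivAt_stdNormalCDF x).deriv ▸ stdNormalPDF_pos x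

lemma stdNormalCDF_pos (x : ℝ) : 0 < stdNormalCDF x :=
  (setIntegral_nonneg measurableSet_Iic fun t _ => (stdNormalPDF_pos t).le).trans_lt
    (stdNormalCDF_strictMono (sub_one_lt x))

lemma stdNormalPDF_add_mul_stdNormalCDF_nonneg (x : ℝ) :
    0 ≤ stdNormalPDF x + x * stdNormalCDF x := by
  have hint := integrable_stdNormalPDF.integrableOn (s := Iic x)
  have : stdNormalPDF x + x * stdNormalCDF x = ∫ t in Iic x, (x - t) * stdNormalPDF t := by
    simp only [sub_mul]
    rw [integral_sub (hint.const_mul x) integrable_mul_stdNormalPDF.integrableOn,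
      integral_const_mul, integral_Iic_mul_stdNormalPDF, stdNormalCDF]
    ring
  rw [this]
  exact setIntegral_nonneg measurableSet_Iic fun t ht =>
    mul_nonneg (sub_nonneg.2 ht) (stdNormalPDF_pos t).le

lemma hasDerivAt_log_stdNormalCDF (x : ℝ) :
    HasDerivAt (fun y => log (stdNormalCDF y)) (stdNormalPDF x / stdNormalCDF x) x :=
  (hasDerivAt_stdNormalCDF x).log (stdNormalCDF_pos x).ne'

lemma antitone_stdNormalPDF_div_stdNormalCDF :
    Antitone fun x => stdNormalPDF x / stdNormalCDF x := by
  have hderiv (x : ℝ) : HasDerivAt (fun x => stdNormalPDF x / stdNormalCDF x)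
      (-(stdNormalPDF x * (stdNormalPDF x + x * stdNormalCDF x)) / stdNormalCDF x ^ 2) x :=
    ((hasDerivAt_stdNormalPDF x).div (hasDerivAt_stdNormalCDF x)
      (stdNormalCDF_pos x).ne').congr_deriv (by ring)
  refine antitone_of_deriv_nonpos (fun x => (hderiv x).differentiableAt) fun x => ?_
  rw [(hderiv x).deriv, neg_div]
  exact neg_nonpos.2 (div_nonneg (mul_nonneg (stdNormalPDF_pos x).le
    (stdNormalPDF_add_mul_stdNormalCDF_nonneg x)) (sq_nonneg _))

lemma concaveOn_log_stdNormalCDF : ConcaveOn ℝ univ fun x => log (stdNormalCDF x) := by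
  refine Antitone.concaveOn_univ_of_deriv
    (fun x => (hasDerivAt_log_stdNormalCDF x).differentiableAt) ?_
  rw [funext fun x => (hasDerivAt_log_stdNormalCDF x).deriv]
  exact antitone_stdNormalPDF_div_stdNormalCDF

lemma stdNormalCDF_mul_le_sq_midpoint (a b : ℝ) :
    stdNormalCDF a * stdNormalCDF b ≤ stdNormalCDF ((a + b) / 2) ^ 2 := by
  have hmid := concaveOn_log_stdNormalCDF.2 (mem_univ a) (mem_univ b)
    (by norm_num : (0 : ℝ) ≤ 1 / 2) (by norm_num : (0 : ℝ) ≤ 1 / 2) (by norm_num)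
  simp only [smul_eq_mul] at hmid
  rw [show 1 / 2 * a + 1 / 2 * b = (a + b) / 2 by ring] at hmid
  rw [← log_le_log_iff (mul_pos (stdNormalCDF_pos a) (stdNormalCDF_pos b))
    (pow_pos (stdNormalCDF_pos _) 2), log_mul (stdNormalCDF_pos a).ne' (stdNormalCDF_pos b).ne',
    log_pow]
  push_cast
  linarith

/-- For `ε ∈ (0,1)` and `λ = 1`, the minimum of `Q⁻¹(ε_s) + Q⁻¹(ε_c)` over pairs
`(ε_s, ε_c) ∈ (0,1)²` with `ε_s + ε_c − ε_s ε_c ≤ ε` is attained at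
`ε_s = ε_c = 1 − √(1−ε)`, with optimal value `2 Q⁻¹(1 − √(1−ε))`. -/
theorem separation_symmetric_optimum (ε : ℝ) (hε : ε ∈ Set.Ioo (0 : ℝ) 1)
    (Qinv : ℝ → ℝ) (hQinv : ∀ y ∈ Set.Ioo (0 : ℝ) 1, gaussQ (Qinv y) = y) :
    IsLeast {v : ℝ | ∃ εs εc : ℝ, εs ∈ Set.Ioo (0 : ℝ) 1 ∧ εc ∈ Set.Ioo (0 : ℝ) 1 ∧
        εs + εc - εs * εc ≤ ε ∧ v = Qinv εs + Qinv εc}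
      (2 * Qinv (1 - Real.sqrt (1 - ε))) := by
  obtain ⟨hε0, hε1⟩ := hε
  have hcdf : ∀ y ∈ Ioo (0 : ℝ) 1, stdNormalCDF (Qinv y) = 1 - y := fun y hy => by
    linarith [gaussQ_eq_one_sub_stdNormalCDF (Qinv y), hQinv y hy]
  set r := √(1 - ε)
  have hr_sq : r ^ 2 = 1 - ε := sq_sqrt (by linarith)
  have hr_pos : 0 < r := sqrt_pos.2 (by linarith)
  have hr_lt_one : r < 1 := (sqrt_lt' one_pos).2 (by linarith)
  have hopt : 1 - r ∈ Ioo (0 : ℝ) 1 := ⟨by linarith, by linarith⟩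
  refine ⟨⟨1 - r, 1 - r, hopt, hopt, by nlinarith, two_mul _⟩, ?_⟩
  rintro _ ⟨εs, εc, hs, hc, hsc, rfl⟩
  have hsq : stdNormalCDF (Qinv (1 - r)) ^ 2 ≤ stdNormalCDF ((Qinv εs + Qinv εc) / 2) ^ 2 :=
    calc stdNormalCDF (Qinv (1 - r)) ^ 2 = 1 - ε := by rw [hcdf _ hopt, sub_sub_cancel, hr_sq]
      _ ≤ (1 - εs) * (1 - εc) := by linarith
      _ = stdNormalCDF (Qinv εs) * stdNormalCDF (Qinv εc) := by rw [hcdf _ hs, hcdf _ hc]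
      _ ≤ _ := stdNormalCDF_mul_le_sq_midpoint _ _
  have hmid := stdNormalCDF_strictMono.le_iff_le.1 <|
    (pow_le_pow_iff_left₀ (stdNormalCDF_pos _).le (stdNormalCDF_pos _).le two_ne_zero).1 hsq
  linarith
end
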